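/- An infinite word over a pushdown alphabet has at most one infinite maximal abstract path. -/

import Mathlib

inductive SymKind where
  | call | ret | intl
deriving DecidableEq

/-- Well-matched words over a pushdown alphabet, where `k` assigns to each
letter its kind (call, return, or internal). -/
inductive WellMatched {A : Type*} (k : A → SymKind) : List A → Prop
  | nil : WellMatched k []
  | int {a : A} {s : List A} : k a = SymKind.intl → WellMatched k s →
      WellMatched k (a :: s)
  | matched {c r : A} {s s' : List A} : k c = SymKind.call → k r = SymKind.ret →
      WellMatched k s → WellMatched k s' →
      WellMatched k (c :: (s ++ r :: s'))

/-- Number of call symbols in a finite word. -/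
def callCount {A : Type*} (k : A → SymKind) (s : List A) : ℕ :=
  s.countP (fun a => decide (k a = SymKind.call))

/-- Number of return symbols in a finite word. -/
def retCount {A : Type*} (k : A → SymKind) (s : List A) : ℕ :=
  s.countP (fun a => decide (k a = SymKind.ret))

/-- The finite subword `σ[i, j-1]` of the infinite word `σ` (letters at
positions `i, i+1, ..., j-1`). -/
def wordSlice {A : Type*} (σ : ℕ → A) (i j : ℕ) : List A :=
  (List.range (j - i)).map fun n => σ (i + n)

/-- `j` is a matching return of position `i`: `j > i`, `j` is a return
position, and the subword `σ[i+1, j-1]` is well-matched. -/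
def MatchRet {A : Type*} (k : A → SymKind) (σ : ℕ → A) (i j : ℕ) : Prop :=
  i < j ∧ k (σ j) = SymKind.ret ∧ WellMatched k (wordSlice σ (i + 1) j)

/-- The abstract-successor relation `SUCC(abs, σ, i) = j`. -/
def AbsSucc {A : Type*} (k : A → SymKind) (σ : ℕ → A) (i j : ℕ) : Prop :=
  if k (σ i) = SymKind.call then MatchRet k σ i j
  else j = i + 1 ∧ k (σ (i + 1)) ≠ SymKind.ret

/-- `j` is a candidate caller of `i`: a call position `j < i` whose abstract
successor is undefined or greater than `i`. -/
def CallerCand {A : Type*} (k : A → SymKind) (σ : ℕ → A) (i j : ℕ) : Prop :=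
  j < i ∧ k (σ j) = SymKind.call ∧ ∀ m, AbsSucc k σ j m → i < m

/-- `j` is the caller of `i`: the greatest candidate caller. -/
def Caller {A : Type*} (k : A → SymKind) (σ : ℕ → A) (i j : ℕ) : Prop :=
  CallerCand k σ i j ∧ ∀ j', CallerCand k σ i j' → j' ≤ j

/-- `S` is a maximal abstract path (MAP): the set of positions reachable via
the abstract successor from a position `i0` with no abstract predecessor. -/
def IsMAP {A : Type*} (k : A → SymKind) (σ : ℕ → A) (S : Set ℕ) : Prop :=
  ∃ i0, (¬ ∃ p, AbsSucc k σ p i0) ∧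
    S = {j | Relation.ReflTransGen (AbsSucc k σ) i0 j}

/-- The set of positions of the (unique) maximal abstract path visiting `i`. -/
def PosA {A : Type*} (k : A → SymKind) (σ : ℕ → A) (i : ℕ) : Set ℕ :=
  {j | Relation.ReflTransGen (AbsSucc k σ) i j ∨
       Relation.ReflTransGen (AbsSucc k σ) j i}

/-- The set of positions of the caller path of `σ` from `i`. -/
def PosC {A : Type*} (k : A → SymKind) (σ : ℕ → A) (i : ℕ) : Set ℕ :=
  {j | Relation.ReflTransGen (fun a b => Caller k σ a b) i j}
/-!
Abstract paths only move forward. If two maximal abstract paths start at `a < b`, the path from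
`a`, being infinite, must jump over the threshold `b` in a single step `p → m` with `p < b ≤ m`;
since `b` has no abstract predecessor, `m > b`, so the step is a call `p` with matching return
`m`. Then `b` lies inside the well-matched segment `σ[p+1, m-1]`, and an abstract path started
inside a well-matched segment can never leave it: every call there has its matching return
there too, and the return `σ m` blocks the internal steps. Hence the path from `b` is finite.
-/

theorem Relation.ReflTransGen.exists_step_crossing {α : Type*} [LinearOrder α]
    {r : α → α → Prop} {x y c : α} (h : Relation.ReflTransGen r x y) (hx : x < c)
    (hy : c ≤ y) : ∃ p m, r p m ∧ p < c ∧ c ≤ m := by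
  induction h with
  | refl => exact absurd hx (not_lt.mpr hy)
  | @tail y' y _ hstep ih =>
    rcases lt_or_ge y' c with hy' | hy'
    · exact ⟨y', y, hstep, hy', hy⟩
    · exact ih hy'

section

variable {A : Type*} {k : A → SymKind}

namespace WellMatched

theorem callCount_eq_retCount {s : List A} (h : WellMatched k s) :
    callCount k s = retCount k s := by
  induction h with
  | nil => rfl
  | int ha _ ih => simp [callCount, retCount, ha] at *; omega
  | matched hc hr _ _ ih ih' => simp [callCount, retCount, hc, hr] at *; omega

theorem retCount_le_callCount_of_append_eq {s t u : List A} (h : WellMatched k s)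
    (hs : t ++ u = s) : retCount k t ≤ callCount k t := by
  induction h generalizing t u with
  | nil => simp_all [callCount, retCount]
  | @int a s ha _ ih =>
    rcases t with _ | ⟨b, t⟩
    · simp [callCount, retCount]
    rw [List.cons_append, List.cons_eq_cons] at hs
    obtain ⟨rfl, hs⟩ := hs
    have := ih hs
    simp [callCount, retCount, ha] at *; omega
  | @matched c r s s' hc hr hs₁ _ ih ih' =>
    rcases t with _ | ⟨b, t⟩
    · simp [callCount, retCount]
    rw [List.cons_append, List.cons_eq_cons] at hs
    obtain ⟨rfl, hs⟩ := hs
    rcases List.append_eq_append_iff.mp hs with ⟨t', rfl, -⟩ | ⟨t', rfl, ht'⟩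
    · have := ih (rfl : t ++ t' = t ++ t')
      simp [callCount, retCount, hc] at *; omega
    have hcount := hs₁.callCount_eq_retCount
    rcases t' with _ | ⟨r', t'⟩
    · simp [callCount, retCount, hc] at *; omega
    rw [List.cons_append, List.cons_eq_cons] at ht'
    obtain ⟨rfl, ht'⟩ := ht'
    have := ih' ht'.symm
    simp [callCount, retCount, hc, hr] at *; omega

theorem kind_ne_ret_of_append_cons {v w : List A} {r : A} (h : WellMatched k (v ++ r :: w))
    (hv : WellMatched k v) : k r ≠ SymKind.ret := by
  intro hr
  have hle := h.retCount_le_callCount_of_append_eq (t := v ++ [r]) (u := w) (by simp)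
  have heq := hv.callCount_eq_retCount
  simp [callCount, retCount, List.countP_append, hr] at hle heq
  omega

theorem exists_ret_of_append_cons {s t u : List A} {c : A} (h : WellMatched k s)
    (hs : t ++ c :: u = s) (hc : k c = SymKind.call) :
    ∃ v r w, u = v ++ r :: w ∧ k r = SymKind.ret ∧ WellMatched k v := by
  induction h generalizing t u with
  | nil => simp at hs
  | @int a s ha _ ih =>
    rcases t with _ | ⟨b, t⟩
    · simp_all
    exact ih (List.cons.inj hs).2
  | @matched c' r s s' hc' hr hs₁ _ ih ih' =>
    rcases t with _ | ⟨b, t⟩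
    · exact ⟨s, r, s', (List.cons.inj hs).2, hr, hs₁⟩
    rw [List.cons_append, List.cons_eq_cons] at hs
    obtain ⟨rfl, hs⟩ := hs
    rcases List.append_eq_append_iff.mp hs with ⟨t', rfl, ht'⟩ | ⟨t', rfl, ht'⟩
    · rcases t' with _ | ⟨c'', t'⟩
      · simp_all
      rw [List.cons_append, List.cons_eq_cons] at ht'
      obtain ⟨rfl, rfl⟩ := ht'
      obtain ⟨v, r', w, rfl, hr', hv⟩ := ih (t := t) (u := t') rfl
      exact ⟨v, r', w ++ r :: s', by simp, hr', hv⟩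
    · rcases t' with _ | ⟨r'', t'⟩
      · simp_all
      rw [List.cons_append, List.cons_eq_cons] at ht'
      exact ih' ht'.2.symm

end WellMatched

section wordSlice

variable (σ : ℕ → A)

theorem wordSlice_eq_map_range' (i j : ℕ) : wordSlice σ i j = (List.range' i (j - i)).map σ := by
  simp [wordSlice, List.range'_eq_map_range, List.map_map, Function.comp_def]

theorem wordSlice_length (i j : ℕ) : (wordSlice σ i j).length = j - i := by
  simp [wordSlice]

theorem wordSlice_append {i j l : ℕ} (hij : i ≤ j) (hjl : j ≤ l) :
    wordSlice σ i j ++ wordSlice σ j l = wordSlice σ i l := by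
  obtain ⟨m, rfl⟩ := Nat.exists_eq_add_of_le hij
  obtain ⟨n, rfl⟩ := Nat.exists_eq_add_of_le hjl
  simp only [wordSlice_eq_map_range', ← List.map_append, Nat.add_sub_cancel_left, add_assoc,
    List.range'_append_1, Nat.add_sub_add_left]

theorem wordSlice_eq_cons {i j : ℕ} (hij : i < j) :
    wordSlice σ i j = σ i :: wordSlice σ (i + 1) j := by
  rw [wordSlice_eq_map_range', wordSlice_eq_map_range', show j - i = j - (i + 1) + 1 by omega,
    List.range'_succ, List.map_cons]

theorem wordSlice_eq_append_cons {i j : ℕ} {v w : List A} {r : A}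
    (h : wordSlice σ i j = v ++ r :: w) :
    i + v.length < j ∧ wordSlice σ i (i + v.length) = v ∧ σ (i + v.length) = r := by
  have hlen := congrArg List.length h
  simp only [wordSlice_length, List.length_append, List.length_cons] at hlen
  have hlt : i + v.length < j := by omega
  rw [← wordSlice_append σ (Nat.le_add_right i v.length) hlt.le,
    wordSlice_eq_cons σ hlt] at h
  obtain ⟨hv, hr⟩ := List.append_inj h (by simp [wordSlice_length])
  exact ⟨hlt, hv, (List.cons.inj hr).1⟩

end wordSlice

variable {σ : ℕ → A}

theorem MatchRet.unique {i j j' : ℕ} (h : MatchRet k σ i j) (h' : MatchRet k σ i j') :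
    j = j' := by
  wlog hle : j ≤ j' generalizing j j'
  · exact (this h' h (le_of_not_ge hle)).symm
  obtain ⟨hij, hj, hwm⟩ := h
  obtain ⟨-, -, hwm'⟩ := h'
  by_contra hne
  rw [← wordSlice_append σ hij hle, wordSlice_eq_cons σ (lt_of_le_of_ne hle hne)] at hwm'
  exact hwm'.kind_ne_ret_of_append_cons hwm hj

theorem exists_matchRet_of_wellMatched_wordSlice {a b p : ℕ}
    (hwm : WellMatched k (wordSlice σ a b)) (hap : a ≤ p) (hpb : p < b)
    (hp : k (σ p) = SymKind.call) : ∃ q < b, MatchRet k σ p q := by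
  rw [← wordSlice_append σ hap hpb.le, wordSlice_eq_cons σ hpb] at hwm
  obtain ⟨v, r, w, hvw, hr, hv⟩ := hwm.exists_ret_of_append_cons rfl hp
  obtain ⟨hlt, hslice, hσ⟩ := wordSlice_eq_append_cons σ hvw
  exact ⟨p + 1 + v.length, hlt, by omega, hσ ▸ hr, hslice.symm ▸ hv⟩

theorem AbsSucc.lt {i j : ℕ} (h : AbsSucc k σ i j) : i < j := by
  unfold AbsSucc at h
  split_ifs at h
  · exact h.1
  · omega

theorem AbsSucc.matchRet_of_succ_lt {i j : ℕ} (h : AbsSucc k σ i j) (hij : i + 1 < j) :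
    MatchRet k σ i j := by
  unfold AbsSucc at h
  split_ifs at h
  · exact h
  · omega

theorem AbsSucc.lt_of_wellMatched_wordSlice {a b i j : ℕ} (h : AbsSucc k σ i j)
    (hwm : WellMatched k (wordSlice σ a b)) (hb : k (σ b) = SymKind.ret)
    (hai : a ≤ i) (hib : i < b) : j < b := by
  unfold AbsSucc at h
  split_ifs at h with hi
  · obtain ⟨q, hqb, hq⟩ := exists_matchRet_of_wellMatched_wordSlice hwm hai hib hi
    exact h.unique hq ▸ hqb
  · obtain ⟨rfl, hj⟩ := h
    exact lt_of_le_of_ne hib fun h ↦ hj (h ▸ hb)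

theorem reflTransGen_absSucc_lt_of_wellMatched_wordSlice {a b x y : ℕ}
    (hwm : WellMatched k (wordSlice σ a b)) (hb : k (σ b) = SymKind.ret)
    (hax : a ≤ x) (hxb : x < b) (h : Relation.ReflTransGen (AbsSucc k σ) x y) : y < b := by
  suffices a ≤ y ∧ y < b from this.2
  induction h with
  | refl => exact ⟨hax, hxb⟩
  | tail _ hstep ih =>
    exact ⟨ih.1.trans hstep.lt.le, hstep.lt_of_wellMatched_wordSlice hwm hb ih.1 ih.2⟩

theorem MatchRet.finite_reachable {p m x : ℕ} (h : MatchRet k σ p m) (hpx : p < x)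
    (hxm : x < m) : {y | Relation.ReflTransGen (AbsSucc k σ) x y}.Finite :=
  (Set.finite_Iio m).subset fun _ hy ↦
    reflTransGen_absSucc_lt_of_wellMatched_wordSlice h.2.2 h.2.1 hpx hxm hy

theorem le_of_infinite_reachable {a b : ℕ} (hb : ¬ ∃ p, AbsSucc k σ p b)
    (ha : {y | Relation.ReflTransGen (AbsSucc k σ) a y}.Infinite)
    (hb' : {y | Relation.ReflTransGen (AbsSucc k σ) b y}.Infinite) : b ≤ a := by
  by_contra! hab
  obtain ⟨y, hy, hby⟩ := ha.exists_gt b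
  obtain ⟨p, m, hpm, hpb, hbm⟩ := hy.exists_step_crossing hab hby.le
  have hbm : b < m := lt_of_le_of_ne hbm fun h ↦ hb ⟨p, h ▸ hpm⟩
  exact hb' ((hpm.matchRet_of_succ_lt (by omega)).finite_reachable hpb hbm)

end

/-- an infinite word over a pushdown alphabet has at most one
infinite maximal abstract path. -/
theorem infinite_map_unique {A : Type*} (k : A → SymKind) (σ : ℕ → A)
    {S S' : Set ℕ} (h : IsMAP k σ S) (hInf : S.Infinite)
    (h' : IsMAP k σ S') (hInf' : S'.Infinite) : S = S' := by
  obtain ⟨a, ha, rfl⟩ := h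
  obtain ⟨b, hb, rfl⟩ := h'
  rw [le_antisymm (le_of_infinite_reachable ha hInf' hInf) (le_of_infinite_reachable hb hInf hInf')]
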